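/- Let n ≥ 1, let U ⊆ ℝⁿ be open, and let v : ℝⁿ → ℝ be three times continuously differentiable, strictly positive on U, and satisfy Δv = (n/2)·|Dv|²/v on U. Then for γ = 1 − n the following pointwise inequality holds on U: div( v^{1−n}·S²_{ij}(D²v)·∂_i v ) + ((1−n)/2)·div( v^{−n}·|Dv|²·Dv ) ≤ 0. -/

import Mathlib

/-!
The Newton tensor `S²(D²v)` is divergence free, so `div(S² Dv) = (Δv)² - |D²v|²`. Expanding both
divergences by the product rule, the terms `D²v(Dv, Dv)` cancel for every exponent `γ`, leaving
`v^γ` times a quadratic expression in `Δv`, `|D²v|` and `|Dv|²/v`. Once `Δv = (n/2)|Dv|²/v` is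
substituted, for `γ = 1 - n` this expression is `(Δv)²/n - |D²v|²`, which is nonpositive by
Cauchy–Schwarz on the diagonal of `D²v`.
-/

/-- Partial derivative `∂_i f` of a function on `ℝⁿ`. -/
noncomputable def pd {n : ℕ} (i : Fin n) (f : (Fin n → ℝ) → ℝ) (x : Fin n → ℝ) : ℝ :=
  fderiv ℝ f x (Pi.single i 1)

/-- Laplacian `Δf = ∑ᵢ ∂ᵢᵢ f`. -/
noncomputable def lap {n : ℕ} (f : (Fin n → ℝ) → ℝ) (x : Fin n → ℝ) : ℝ :=
  ∑ i, pd i (pd i f) x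

/-- `S²_{ij}(D²v) = (Δv)·δ_{ij} − ∂_{ij}v`. -/
noncomputable def S2ij {n : ℕ} (v : (Fin n → ℝ) → ℝ) (i j : Fin n) (x : Fin n → ℝ) : ℝ :=
  lap v x * (if i = j then 1 else 0) - pd j (pd i v) x

/-- `|Df|² = ∑ᵢ (∂ᵢf)²`. -/
noncomputable def gradSq {n : ℕ} (f : (Fin n → ℝ) → ℝ) (x : Fin n → ℝ) : ℝ :=
  ∑ i, (pd i f x) ^ 2

open Filter Topology Finset

noncomputable def divergence {n : ℕ} (F : Fin n → (Fin n → ℝ) → ℝ) (x : Fin n → ℝ) : ℝ :=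
  ∑ j, pd j (F j) x

noncomputable def hessSq {n : ℕ} (f : (Fin n → ℝ) → ℝ) (x : Fin n → ℝ) : ℝ :=
  ∑ i, ∑ j, pd j (pd i f) x ^ 2

section

variable {n : ℕ} {f g : (Fin n → ℝ) → ℝ} {x : Fin n → ℝ}

lemma pd_congr_of_eventuallyEq (h : f =ᶠ[𝓝 x] g) (i : Fin n) : pd i f x = pd i g x := by
  unfold pd; rw [h.fderiv_eq]

lemma pd_sub (hf : DifferentiableAt ℝ f x) (hg : DifferentiableAt ℝ g x) (i : Fin n) :
    pd i (fun y => f y - g y) x = pd i f x - pd i g x := by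
  unfold pd; rw [fderiv_fun_sub hf hg]; rfl

lemma pd_mul (hf : DifferentiableAt ℝ f x) (hg : DifferentiableAt ℝ g x) (i : Fin n) :
    pd i (fun y => f y * g y) x = pd i f x * g x + f x * pd i g x := by
  unfold pd; rw [fderiv_fun_mul hf hg]
  simp only [add_apply, smul_apply, smul_eq_mul]; ring

lemma pd_const_mul (c : ℝ) (hf : DifferentiableAt ℝ f x) (i : Fin n) :
    pd i (fun y => c * f y) x = c * pd i f x := by
  unfold pd; rw [fderiv_const_mul hf]; rfl

lemma pd_sum {ι : Type*} (s : Finset ι) {F : ι → (Fin n → ℝ) → ℝ}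
    (hF : ∀ k ∈ s, DifferentiableAt ℝ (F k) x) (i : Fin n) :
    pd i (fun y => ∑ k ∈ s, F k y) x = ∑ k ∈ s, pd i (F k) x := by
  unfold pd; rw [fderiv_fun_sum hF]; simp

lemma pd_rpow_const (p : ℝ) (hf : DifferentiableAt ℝ f x) (hx : f x ≠ 0) (i : Fin n) :
    pd i (fun y => f y ^ p) x = p * f x ^ (p - 1) * pd i f x := by
  unfold pd; rw [(hf.hasFDerivAt.rpow_const (Or.inl hx)).fderiv]; simp

lemma ContDiffAt.pd {m : WithTop ℕ∞} (hf : ContDiffAt ℝ (m + 1) f x) (i : Fin n) :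
    ContDiffAt ℝ m (pd i f) x :=
  hf.fderiv_right_succ.clm_apply contDiffAt_const

lemma ContDiffAt.gradSq {m : WithTop ℕ∞} (hf : ContDiffAt ℝ (m + 1) f x) :
    ContDiffAt ℝ m (gradSq f) x :=
  ContDiffAt.sum fun i _ => (hf.pd i).pow 2

lemma ContDiffAt.lap {m : WithTop ℕ∞} (hf : ContDiffAt ℝ (m + 1 + 1) f x) :
    ContDiffAt ℝ m (lap f) x :=
  ContDiffAt.sum fun i _ => (hf.pd i).pd i

lemma pd_pd_comm (hf : ContDiffAt ℝ 2 f x) (i j : Fin n) :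
    pd i (pd j f) x = pd j (pd i f) x := by
  have hd : DifferentiableAt ℝ (fderiv ℝ f) x :=
    (hf.fderiv_right (m := 1) (by norm_num)).differentiableAt one_ne_zero
  have hpd : ∀ a b, fderiv ℝ (fun y => fderiv ℝ f y b) x a = fderiv ℝ (fderiv ℝ f) x a b := by
    intro a b; rw [fderiv_clm_apply hd (differentiableAt_const b)]; simp
  change fderiv ℝ (fun y => fderiv ℝ f y (Pi.single j 1)) x (Pi.single i 1)
    = fderiv ℝ (fun y => fderiv ℝ f y (Pi.single i 1)) x (Pi.single j 1)
  rw [hpd, hpd]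
  exact hf.isSymmSndFDerivAt (by simp [minSmoothness_of_isRCLikeNormedField]) _ _

lemma pd_lap (hf : ContDiffAt ℝ 3 f x) (i : Fin n) :
    pd i (lap f) x = ∑ j, pd j (pd j (pd i f)) x := by
  have h2 : ∀ j, ContDiffAt ℝ 2 (pd j f) x := fun j => hf.pd (m := 2) j
  have hcomm : ∀ j, pd i (pd j f) =ᶠ[𝓝 x] pd j (pd i f) :=
    fun j => (hf.eventually (by simp)).mono fun y hy => pd_pd_comm (hy.of_le (by norm_num)) i j
  rw [show lap f = fun y => ∑ j, pd j (pd j f) y from rfl,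
    pd_sum _ fun j _ => ((h2 j).pd (m := 1) j).differentiableAt one_ne_zero]
  refine sum_congr rfl fun j _ => ?_
  rw [pd_pd_comm (h2 j) i j, pd_congr_of_eventuallyEq (hcomm j)]

lemma divergence_congr {F G : Fin n → (Fin n → ℝ) → ℝ} (h : ∀ j, F j =ᶠ[𝓝 x] G j) :
    divergence F x = divergence G x :=
  sum_congr rfl fun j _ => pd_congr_of_eventuallyEq (h j) j

lemma divergence_pd : divergence (fun j => pd j f) x = lap f x := rfl

lemma divergence_mul {φ : (Fin n → ℝ) → ℝ} {F : Fin n → (Fin n → ℝ) → ℝ}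
    (hφ : DifferentiableAt ℝ φ x) (hF : ∀ j, DifferentiableAt ℝ (F j) x) :
    divergence (fun j y => φ y * F j y) x = ∑ j, pd j φ x * F j x + φ x * divergence F x := by
  simp only [divergence, pd_mul hφ (hF _), sum_add_distrib, mul_sum]

lemma pd_gradSq (hf : ∀ i, DifferentiableAt ℝ (pd i f) x) (j : Fin n) :
    pd j (gradSq f) x = 2 * ∑ i, pd i f x * pd j (pd i f) x := by
  rw [show gradSq f = fun y => ∑ i, pd i f y * pd i f y by ext; simp [gradSq, sq],
    pd_sum _ fun i _ => (hf i).fun_mul (hf i), mul_sum]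
  exact sum_congr rfl fun i _ => by rw [pd_mul (hf i) (hf i)]; ring

lemma sum_S2ij_mul_pd (hf : ∀ i, DifferentiableAt ℝ (pd i f) x) (j : Fin n) :
    ∑ i, S2ij f i j x * pd i f x = lap f x * pd j f x - 2⁻¹ * pd j (gradSq f) x := by
  simp only [S2ij, pd_gradSq hf, sub_mul, sum_sub_distrib, mul_ite, mul_one, mul_zero, ite_mul,
    zero_mul, sum_ite_eq', mem_univ, if_true]
  rw [← mul_assoc, inv_mul_cancel₀ two_ne_zero, one_mul]
  exact congrArg _ (sum_congr rfl fun i _ => mul_comm _ _)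

lemma lap_gradSq (hf : ContDiffAt ℝ 3 f x) :
    lap (gradSq f) x = 2 * hessSq f x + 2 * ∑ i, pd i (lap f) x * pd i f x := by
  have h2 : ∀ i, ContDiffAt ℝ 2 (pd i f) x := fun i => hf.pd (m := 2) i
  have hd1 : ∀ i, DifferentiableAt ℝ (pd i f) x := fun i => (h2 i).differentiableAt two_ne_zero
  have hd2 : ∀ i j, DifferentiableAt ℝ (pd j (pd i f)) x :=
    fun i j => ((h2 i).pd (m := 1) j).differentiableAt one_ne_zero
  have hpd_gradSq : ∀ j, pd j (gradSq f) =ᶠ[𝓝 x] fun y => 2 * ∑ i, pd i f y * pd j (pd i f) y :=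
    fun j => (hf.eventually (by simp)).mono fun y hy =>
      pd_gradSq (fun i => (hy.pd (m := 2) i).differentiableAt two_ne_zero) j
  have hterm : ∀ j, pd j (pd j (gradSq f)) x
      = 2 * ∑ i, (pd j (pd i f) x ^ 2 + pd i f x * pd j (pd j (pd i f)) x) := by
    intro j
    have hprod : ∀ i, DifferentiableAt ℝ (fun y => pd i f y * pd j (pd i f) y) x :=
      fun i => (hd1 i).fun_mul (hd2 i j)
    rw [pd_congr_of_eventuallyEq (hpd_gradSq j),
      pd_const_mul _ (DifferentiableAt.fun_sum fun i _ => hprod i), pd_sum _ fun i _ => hprod i]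
    exact congrArg _ (sum_congr rfl fun i _ => by rw [pd_mul (hd1 i) (hd2 i j)]; ring)
  calc lap (gradSq f) x
      = ∑ j, 2 * ∑ i, (pd j (pd i f) x ^ 2 + pd i f x * pd j (pd j (pd i f)) x) :=
        sum_congr rfl fun j _ => hterm j
    _ = 2 * ∑ i, (∑ j, pd j (pd i f) x ^ 2 + pd i f x * ∑ j, pd j (pd j (pd i f)) x) := by
        rw [← mul_sum, sum_comm]; simp only [sum_add_distrib, mul_sum]
    _ = _ := by simp only [← pd_lap hf, sum_add_distrib, hessSq, mul_comm, mul_add]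

lemma divergence_S2ij_mul_pd (hf : ContDiffAt ℝ 3 f x) :
    divergence (fun j y => ∑ i, S2ij f i j y * pd i f y) x = lap f x ^ 2 - hessSq f x := by
  have hd1 : ∀ i, DifferentiableAt ℝ (pd i f) x :=
    fun i => (hf.pd (m := 2) i).differentiableAt two_ne_zero
  have hlap : DifferentiableAt ℝ (lap f) x := (hf.lap (m := 1)).differentiableAt one_ne_zero
  have hgradSq : ∀ j, DifferentiableAt ℝ (pd j (gradSq f)) x :=
    fun j => ((hf.gradSq (m := 2)).pd (m := 1) j).differentiableAt one_ne_zero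
  calc divergence (fun j y => ∑ i, S2ij f i j y * pd i f y) x
      = divergence (fun j y => lap f y * pd j f y - 2⁻¹ * pd j (gradSq f) y) x :=
        divergence_congr fun j => (hf.eventually (by simp)).mono fun y hy =>
          sum_S2ij_mul_pd (fun i => (hy.pd (m := 2) i).differentiableAt two_ne_zero) j
    _ = divergence (fun j y => lap f y * pd j f y) x - 2⁻¹ * lap (gradSq f) x := by
        simp only [divergence]
        rw [sum_congr rfl fun j _ => pd_sub (hlap.fun_mul (hd1 j)) ((hgradSq j).const_mul _) j,
          sum_sub_distrib, lap, mul_sum]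
        simp only [pd_const_mul _ (hgradSq _)]
    _ = lap f x ^ 2 - hessSq f x := by
        rw [divergence_mul hlap hd1, divergence_pd, lap_gradSq hf]
        ring

lemma divergence_rpow_mul_S2ij_mul_pd (γ : ℝ) (hf : ContDiffAt ℝ 3 f x) (hx : f x ≠ 0) :
    divergence (fun j y => f y ^ γ * ∑ i, S2ij f i j y * pd i f y) x
      = γ * f x ^ (γ - 1) * (lap f x * gradSq f x - 2⁻¹ * ∑ j, pd j (gradSq f) x * pd j f x)
        + f x ^ γ * (lap f x ^ 2 - hessSq f x) := by
  have hd1 : ∀ i, DifferentiableAt ℝ (pd i f) x :=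
    fun i => (hf.pd (m := 2) i).differentiableAt two_ne_zero
  have hd2 : ∀ i j, DifferentiableAt ℝ (pd j (pd i f)) x :=
    fun i j => ((hf.pd (m := 2) i).pd (m := 1) j).differentiableAt one_ne_zero
  have hlap : DifferentiableAt ℝ (lap f) x := (hf.lap (m := 1)).differentiableAt one_ne_zero
  have hdf : DifferentiableAt ℝ f x := hf.differentiableAt (by norm_num)
  have hS2 : ∀ j, DifferentiableAt ℝ (fun y => ∑ i, S2ij f i j y * pd i f y) x := fun j =>
    DifferentiableAt.fun_sum fun i _ => ((hlap.mul_const _).fun_sub (hd2 i j)).fun_mul (hd1 i)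
  rw [divergence_mul (hdf.rpow_const (Or.inl hx)) hS2, divergence_S2ij_mul_pd hf]
  simp only [pd_rpow_const γ hdf hx, sum_S2ij_mul_pd hd1, gradSq]
  congr 1
  simp only [mul_sum, ← sum_sub_distrib]
  exact sum_congr rfl fun j _ => by ring

lemma divergence_rpow_mul_gradSq_mul_pd (p : ℝ) (hf : ContDiffAt ℝ 2 f x) (hx : f x ≠ 0) :
    divergence (fun j y => f y ^ p * gradSq f y * pd j f y) x
      = p * f x ^ (p - 1) * gradSq f x ^ 2
        + f x ^ p * (∑ j, pd j (gradSq f) x * pd j f x + gradSq f x * lap f x) := by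
  have hd1 : ∀ i, DifferentiableAt ℝ (pd i f) x :=
    fun i => (hf.pd (m := 1) i).differentiableAt one_ne_zero
  have hdf : DifferentiableAt ℝ f x := hf.differentiableAt (by norm_num)
  have hgradSq : DifferentiableAt ℝ (gradSq f) x := (hf.gradSq (m := 1)).differentiableAt one_ne_zero
  have hrpow := hdf.rpow_const (p := p) (Or.inl hx)
  rw [divergence_mul (hrpow.fun_mul hgradSq) hd1]
  have hQ : gradSq f x ^ 2 = ∑ j, gradSq f x * pd j f x ^ 2 := by rw [← mul_sum]; exact sq _
  rw [divergence_pd, hQ, mul_add, ← add_assoc, mul_sum,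
    mul_sum, ← sum_add_distrib]
  simp only [pd_mul hrpow hgradSq, pd_rpow_const p hdf hx]
  exact congrArg₂ _ (sum_congr rfl fun j _ => by ring) (by ring)

lemma divergence_rpow_S2ij_add_divergence_rpow_gradSq (γ : ℝ) (hf : ContDiffAt ℝ 3 f x)
    (hx : f x ≠ 0) :
    divergence (fun j y => f y ^ γ * ∑ i, S2ij f i j y * pd i f y) x
      + γ / 2 * divergence (fun j y => f y ^ (γ - 1) * gradSq f y * pd j f y) x
      = f x ^ γ * (lap f x ^ 2 - hessSq f x + 3 * γ / 2 * lap f x * (gradSq f x / f x)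
          + γ * (γ - 1) / 2 * (gradSq f x / f x) ^ 2) := by
  rw [divergence_rpow_mul_S2ij_mul_pd γ hf hx,
    divergence_rpow_mul_gradSq_mul_pd (γ - 1) (hf.of_le (by norm_num)) hx]
  simp only [Real.rpow_sub_one hx]
  field_simp
  ring

lemma sq_lap_le_mul_hessSq (f : (Fin n → ℝ) → ℝ) (x : Fin n → ℝ) :
    lap f x ^ 2 ≤ n * hessSq f x :=
  calc lap f x ^ 2 ≤ n * ∑ i, pd i (pd i f) x ^ 2 := by
        simpa [lap] using sq_sum_le_card_mul_sum_sq (s := univ) (f := fun i => pd i (pd i f) x)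
    _ ≤ n * hessSq f x := by
        gcongr
        exact sum_le_sum fun i _ => single_le_sum (f := fun j => pd j (pd i f) x ^ 2)
          (fun j _ => sq_nonneg _) (mem_univ i)

end

/-- For `γ = 1 − n`: if `v > 0` solves `Δv = (n/2)·|Dv|²/v` on `U`, then
`div(v^{1−n}·S²_{ij}(D²v)·∂ᵢv) + ((1−n)/2)·div(v^{−n}·|Dv|²·Dv) ≤ 0` on `U`. -/
theorem stmt_9 (n : ℕ) (hn : 1 ≤ n) (U : Set (Fin n → ℝ)) (hU : IsOpen U)
    (v : (Fin n → ℝ) → ℝ) (hv : ContDiffOn ℝ 3 v U) (hpos : ∀ x ∈ U, 0 < v x)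
    (hpde : ∀ x ∈ U, lap v x = ((n : ℝ) / 2) * gradSq v x / v x)
    (x : Fin n → ℝ) (hx : x ∈ U) :
    (∑ j, pd j (fun y => v y ^ ((1 : ℝ) - n) * ∑ i, S2ij v i j y * pd i v y) x)
      + (((1 : ℝ) - n) / 2)
        * ∑ j, pd j (fun y => v y ^ (-(n : ℝ)) * gradSq v y * pd j v y) x
    ≤ 0 := by
  have hvx : 0 < v x := hpos x hx
  have hlap : lap v x = n / 2 * (gradSq v x / v x) := by rw [hpde x hx]; ring
  have hhess : n / 4 * (gradSq v x / v x) ^ 2 ≤ hessSq v x := by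
    have hn' : (0 : ℝ) < n := by exact_mod_cast hn
    have := sq_lap_le_mul_hessSq v x
    rw [hlap] at this
    nlinarith
  have key := divergence_rpow_S2ij_add_divergence_rpow_gradSq (1 - n)
    (hv.contDiffAt (hU.mem_nhds hx)) hvx.ne'
  rw [show (1 : ℝ) - n - 1 = -n by ring, hlap] at key
  exact key.trans_le (mul_nonpos_of_nonneg_of_nonpos (Real.rpow_nonneg hvx.le _) (by nlinarith))
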